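/- Let G be a group, B a subgroup of G, and C a subgroup of B with N_B(C) = C. Assume that for every g ∈ N_G(B) there exists b ∈ B with (C^g)^b = C. Then N_G(B) = B·N_{N_G(B)}(C), and there is an injective group homomorphism from N_G(B)/B into N_G(C)/C. In particular, if N_G(C) = C then N_G(B) = B. -/

import Mathlib

/-!
A Frattini argument: if `g` normalizes `B`, some `b ∈ B` moves `C^g` back to `C`, so `g b`
normalizes both `B` and `C`. Hence `N_G(B) = H B` with `H = N_G(C) ∩ N_G(B)`, and
`N_G(B)/B ≅ H/(H ∩ B)`. Since `N_B(C) = C` we get `H ∩ B = C`, and `H/C` embeds into `N_G(C)/C`.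
-/

open Pointwise

/-- The conjugate `H^g = g⁻¹ * H * g` of a subgroup `H` by an element `g`. -/
def conjSub {G : Type*} [Group G] (H : Subgroup G) (g : G) : Subgroup G :=
  H.map (MulAut.conj g⁻¹).toMonoidHom

section

variable {G : Type*} [Group G]

lemma conjSub_conjSub (H : Subgroup G) (g b : G) :
    conjSub (conjSub H g) b = conjSub H (g * b) := by
  simp only [conjSub, Subgroup.map_map, mul_inv_rev, map_mul]
  rfl

lemma conjSub_eq_self_iff {H : Subgroup G} {g : G} :
    conjSub H g = H ↔ g ∈ Subgroup.normalizer (H : Set G) := by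
  rw [← inv_mem_iff, Subgroup.mem_normalizer_iff_map_conj_eq]
  rfl

end

namespace Subgroup

variable {G : Type*} [Group G]

lemma ker_mk'_comp_inclusion {H K : Subgroup G} (hHK : H ≤ K) (B : Subgroup G)
    [(B.subgroupOf K).Normal] :
    ((QuotientGroup.mk' (B.subgroupOf K)).comp (inclusion hHK)).ker = B.subgroupOf H := by
  rw [← MonoidHom.comap_ker, QuotientGroup.ker_mk', comap_inclusion_subgroupOf]

lemma surjective_mk'_comp_inclusion {H K B : Subgroup G} (hHK : H ≤ K) [(B.subgroupOf K).Normal]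
    (hK : (K : Set G) ⊆ H * B) :
    Function.Surjective ((QuotientGroup.mk' (B.subgroupOf K)).comp (inclusion hHK)) := by
  rintro x
  obtain ⟨⟨k, hk⟩, rfl⟩ := QuotientGroup.mk'_surjective _ x
  obtain ⟨h, hh, b, hb, rfl⟩ := hK hk
  refine ⟨⟨h, hh⟩, QuotientGroup.eq.mpr ?_⟩
  simpa [mem_subgroupOf] using hb

variable {B C : Subgroup G}

theorem normalizer_eq_normalizer_inf_sup
    (hconj : ∀ g ∈ normalizer (B : Set G), ∃ b ∈ B, conjSub (conjSub C g) b = C) :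
    normalizer (B : Set G) = normalizer (C : Set G) ⊓ normalizer (B : Set G) ⊔ B := by
  refine le_antisymm (fun g hg => ?_) (sup_le inf_le_right le_normalizer)
  obtain ⟨b, hb, hgb⟩ := hconj g hg
  rw [conjSub_conjSub, conjSub_eq_self_iff] at hgb
  have hgbB : g * b ∈ normalizer (B : Set G) := mul_mem hg (le_normalizer hb)
  have hH : g * b ∈ normalizer (C : Set G) ⊓ normalizer (B : Set G) := ⟨hgb, hgbB⟩
  simpa using mul_mem (mem_sup_left hH) (mem_sup_right (inv_mem hb) : b⁻¹ ∈ _ ⊔ B)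

lemma subgroupOf_normalizer_inf_eq (hCB : C ≤ B) (hself : normalizer (C : Set G) ⊓ B = C) :
    B.subgroupOf (normalizer (C : Set G) ⊓ normalizer (B : Set G)) =
      C.subgroupOf (normalizer (C : Set G) ⊓ normalizer (B : Set G)) := by
  rw [subgroupOf_inj]
  ext g
  simp only [mem_inf]
  constructor
  · rintro ⟨hgB, hgC, hgN⟩
    exact ⟨by rw [← hself]; exact ⟨hgC, hgB⟩, hgC, hgN⟩
  · rintro ⟨hg, hgC, hgN⟩
    exact ⟨hCB hg, hgC, hgN⟩

end Subgroup

theorem MonoidHom.exists_injective_of_surjective_of_ker_eq {A Q R : Type*} [Group A] [Group Q]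
    [Group R] {φ : A →* Q} (hφ : Function.Surjective φ) {ψ : A →* R} (h : φ.ker = ψ.ker) :
    ∃ f : Q →* R, Function.Injective f :=
  ⟨(QuotientGroup.kerLift ψ).comp ((QuotientGroup.quotientMulEquivOfEq h).toMonoidHom.comp
      (QuotientGroup.quotientKerEquivOfSurjective φ hφ).symm.toMonoidHom),
    (QuotientGroup.kerLift_injective ψ).comp
      ((QuotientGroup.quotientMulEquivOfEq h).injective.comp
        (QuotientGroup.quotientKerEquivOfSurjective φ hφ).symm.injective)⟩

open Subgroup in
/-- Let `G` be a group, `B` a subgroup of `G`, and `C` a subgroup of `B` with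
`N_B(C) = C`.  Assume that every `N_G(B)`-conjugate of `C` is `B`-conjugate to `C`.
Then `N_G(B) = B·N_{N_G(B)}(C)`, and there is an injective group homomorphism from
`N_G(B)/B` into `N_G(C)/C`.  In particular, if `N_G(C) = C` then `N_G(B) = B`. -/
theorem normalizer_quotient_embeds_weyl {G : Type*} [Group G] (B C : Subgroup G)
    (hCB : C ≤ B)
    (hself : (Subgroup.normalizer (C : Set G)) ⊓ B = C)
    (hconj : ∀ g ∈ (Subgroup.normalizer (B : Set G)), ∃ b ∈ B, conjSub (conjSub C g) b = C) :
    ((Subgroup.normalizer (B : Set G)) : Set G) =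
        (B : Set G) * (((Subgroup.normalizer (C : Set G)) ⊓ (Subgroup.normalizer (B : Set G)) : Subgroup G) : Set G) ∧
      (∃ f : (↥(Subgroup.normalizer (B : Set G)) ⧸ B.subgroupOf (Subgroup.normalizer (B : Set G))) →*
          (↥(Subgroup.normalizer (C : Set G)) ⧸ C.subgroupOf (Subgroup.normalizer (C : Set G))), Function.Injective f) ∧
      ((Subgroup.normalizer (C : Set G)) = C → (Subgroup.normalizer (B : Set G)) = B) := by
  have hN := normalizer_eq_normalizer_inf_sup hconj
  have hHN : normalizer (C : Set G) ⊓ normalizer (B : Set G) ≤ normalizer (B : Set G) :=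
    inf_le_right
  refine ⟨?_, ?_, fun hC => le_antisymm ?_ le_normalizer⟩
  · conv_lhs => rw [hN, sup_comm]
    exact coe_mul_of_right_le_normalizer_left _ _ hHN
  · refine MonoidHom.exists_injective_of_surjective_of_ker_eq
      (surjective_mk'_comp_inclusion hHN ?_) (ψ := (QuotientGroup.mk' _).comp (inclusion inf_le_left)) ?_
    · conv_lhs => rw [hN]
      rw [coe_mul_of_left_le_normalizer_right _ _ hHN]
    · rw [ker_mk'_comp_inclusion, ker_mk'_comp_inclusion, subgroupOf_normalizer_inf_eq hCB hself]
  · conv_lhs => rw [hN, hC]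
    exact sup_le (inf_le_left.trans hCB) le_rfl
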